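/- arXiv:2303.13145 — 2 statements merged into one kernel-verified Lean document; each statement's English description precedes it below -/
import Mathlib

section
/- Let H be a k-uniform hypergraph on n vertices without isolated vertices and with fewer than n edges. Then λ_1(H) = k/(k-1). -/
open Finset

variable {n : ℕ}

def hdeg (E : Finset (Finset (Fin n))) (v : Fin n) : ℕ :=
  (E.filter fun e => v ∈ e).card

def codeg (E : Finset (Finset (Fin n))) (u v : Fin n) : ℕ :=
  (E.filter fun e => u ∈ e ∧ v ∈ e).card

noncomputable def adjMat (E : Finset (Finset (Fin n))) : Matrix (Fin n) (Fin n) ℝ :=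
  fun u v => if u = v then 0
    else ∑ e ∈ E.filter (fun e => u ∈ e ∧ v ∈ e), (1 : ℝ) / ((e.card : ℝ) - 1)

noncomputable def lapMat (E : Finset (Finset (Fin n))) : Matrix (Fin n) (Fin n) ℝ :=
  Matrix.diagonal (fun v => (hdeg E v : ℝ)) - adjMat E

noncomputable def normLap (E : Finset (Finset (Fin n))) : Matrix (Fin n) (Fin n) ℝ :=
  Matrix.diagonal (fun v => (hdeg E v : ℝ) ^ (-(1/2) : ℝ)) * lapMat E *
    Matrix.diagonal (fun v => (hdeg E v : ℝ) ^ (-(1/2) : ℝ))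

noncomputable def eigsAsc (M : Matrix (Fin n) (Fin n) ℝ) : Fin n → ℝ :=
  if h : M.IsHermitian then (h.eigenvalues ∘ Tuple.sort h.eigenvalues) else 0

noncomputable def lamMax {n : ℕ} (M : Matrix (Fin n) (Fin n) ℝ) : ℝ :=
  ⨆ i, eigsAsc M i

noncomputable def volR {n : ℕ} (E : Finset (Finset (Fin n))) (S : Finset (Fin n)) : ℝ :=
  ∑ v ∈ S, (hdeg E v : ℝ)

noncomputable def bndR {n : ℕ} (E : Finset (Finset (Fin n))) (S : Finset (Fin n)) : ℝ :=
  ∑ u ∈ S, ∑ v ∈ Sᶜ, (codeg E u v : ℝ)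

open Matrix

/-! For a `k`-uniform edge set the Laplacian quadratic form is
`yᵀ L y = k/(k-1) · yᵀ D y - ∑ₑ (∑_{u ∈ e} y u)² / (k-1)`,
so the Rayleigh quotient of `D^{-1/2} L D^{-1/2}` is at most `k/(k-1)`, with equality at
`x = D^{1/2} y` whenever every edge sum of `y` vanishes. With fewer edges than vertices this
homogeneous system has a nonzero solution. -/

namespace Matrix

variable {ι : Type*} [Fintype ι] [DecidableEq ι]

theorem dotProduct_diagonal_mul_mul_diagonal_mulVec {R : Type*} [CommSemiring R]
    (d : ι → R) (L : Matrix ι ι R) (x : ι → R) :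
    x ⬝ᵥ (diagonal d * L * diagonal d) *ᵥ x = (d * x) ⬝ᵥ L *ᵥ (d * x) := by
  have hdx : diagonal d *ᵥ x = d * x := funext fun i => mulVec_diagonal d x i
  have hxd : x ᵥ* diagonal d = d * x :=
    funext fun i => (vecMul_diagonal x d i).trans (mul_comm _ _)
  rw [← mulVec_mulVec, ← mulVec_mulVec, hdx, dotProduct_mulVec, hxd]

theorem dotProduct_diagonal_mulVec_rpow_neg_half {h : ι → ℝ} (hpos : ∀ v, 0 < h v) (x : ι → ℝ) :
    ((fun v => h v ^ (-(1/2) : ℝ)) * x) ⬝ᵥ diagonal h *ᵥ ((fun v => h v ^ (-(1/2) : ℝ)) * x)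
      = x ⬝ᵥ x := by
  refine sum_congr rfl fun v _ => ?_
  have hv : h v ^ (-(1/2) : ℝ) * h v ^ (-(1/2) : ℝ) * h v = 1 := by
    rw [← Real.rpow_add (hpos v), ← Real.rpow_add_one (hpos v).ne']
    norm_num
  simp only [Pi.mul_apply, mulVec_diagonal]
  linear_combination x v * x v * hv

variable {A : Matrix ι ι ℝ} {c : ℝ}

theorem IsHermitian.eigenvalues_le_of_dotProduct_mulVec_le (hA : A.IsHermitian)
    (hle : ∀ x, x ⬝ᵥ A *ᵥ x ≤ c * (x ⬝ᵥ x)) (i : ι) : hA.eigenvalues i ≤ c := by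
  have hnorm : hA.eigenvectorBasis i ⬝ᵥ hA.eigenvectorBasis i = 1 := by
    have h := real_inner_self_eq_norm_sq (hA.eigenvectorBasis i)
    rwa [EuclideanSpace.inner_eq_star_dotProduct, star_trivial,
      hA.eigenvectorBasis.orthonormal.1 i, one_pow] at h
  simpa [hA.eigenvalues_eq, hnorm] using hle (hA.eigenvectorBasis i)

theorem mulVec_eq_smul_of_dotProduct_mulVec_eq (hA : A.IsHermitian)
    (hle : ∀ x, x ⬝ᵥ A *ᵥ x ≤ c * (x ⬝ᵥ x)) {x : ι → ℝ} (hx : x ⬝ᵥ A *ᵥ x = c * (x ⬝ᵥ x)) :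
    A *ᵥ x = c • x := by
  have hM : (c • 1 - A).PosSemidef := by
    refine .of_dotProduct_mulVec_nonneg ((isHermitian_one.smul (.all c)).sub hA) fun y => ?_
    simpa [sub_mulVec, smul_mulVec, dotProduct_sub] using hle y
  have := (hM.dotProduct_mulVec_zero_iff x).mp
    (by simp [sub_mulVec, smul_mulVec, dotProduct_sub, hx])
  rwa [sub_mulVec, sub_eq_zero, smul_mulVec, one_mulVec, eq_comm] at this

theorem IsHermitian.mem_range_eigenvalues_of_mulVec_eq_smul (hA : A.IsHermitian)
    {x : ι → ℝ} (hx : x ≠ 0) (hAx : A *ᵥ x = c • x) : c ∈ Set.range hA.eigenvalues := by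
  rw [← hA.spectrum_real_eq_range_eigenvalues, ← spectrum_toLin']
  exact (Module.End.hasEigenvalue_of_hasEigenvector
    ⟨Module.End.mem_eigenspace_iff.mpr (by simpa using hAx), hx⟩).mem_spectrum

end Matrix

theorem lamMax_eq_iSup_eigenvalues {A : Matrix (Fin n) (Fin n) ℝ} (hA : A.IsHermitian) :
    lamMax A = ⨆ i, hA.eigenvalues i := by
  rw [lamMax, eigsAsc, dif_pos hA]
  exact (Tuple.sort hA.eigenvalues).iSup_comp

theorem lamMax_eq_of_dotProduct_mulVec_le {A : Matrix (Fin n) (Fin n) ℝ} (hA : A.IsHermitian)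
    {c : ℝ} (hle : ∀ x, x ⬝ᵥ A *ᵥ x ≤ c * (x ⬝ᵥ x)) {x : Fin n → ℝ} (hx : x ≠ 0)
    (heq : x ⬝ᵥ A *ᵥ x = c * (x ⬝ᵥ x)) : lamMax A = c := by
  obtain ⟨i, hi⟩ := hA.mem_range_eigenvalues_of_mulVec_eq_smul hx
    (mulVec_eq_smul_of_dotProduct_mulVec_eq hA hle heq)
  have : Nonempty (Fin n) := ⟨i⟩
  rw [lamMax_eq_iSup_eigenvalues hA]
  exact le_antisymm (ciSup_le (hA.eigenvalues_le_of_dotProduct_mulVec_le hle))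
    (hi ▸ le_ciSup (Set.finite_range _).bddAbove i)

theorem Finset.sum_offDiag_mul {ι R : Type*} [DecidableEq ι] [CommRing R] (s : Finset ι)
    (y : ι → R) :
    ∑ p ∈ s.offDiag, y p.1 * y p.2 = (∑ u ∈ s, y u) ^ 2 - ∑ u ∈ s, y u ^ 2 := by
  rw [eq_sub_iff_add_eq, sq, sum_mul_sum, ← sum_product', ← diag_union_offDiag,
    sum_union (disjoint_diag_offDiag s), add_comm, diag, sum_map]
  simp [sq]

theorem exists_ne_zero_forall_sum_eq_zero {K ι : Type*} [Field K] [Fintype ι]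
    (E : Finset (Finset ι)) (hE : E.card < Fintype.card ι) :
    ∃ y : ι → K, y ≠ 0 ∧ ∀ e ∈ E, ∑ u ∈ e, y u = 0 := by
  classical
  let incidence : ι → E → K := fun u e => if u ∈ e.1 then 1 else 0
  have hdep : ¬ LinearIndependent K incidence := fun h => by
    simpa using hE.trans_le h.fintype_card_le_finrank
  obtain ⟨y, hy, u, hu⟩ := Fintype.not_linearIndependent_iff.mp hdep
  refine ⟨y, fun h => hu (congrFun h u), fun e he => ?_⟩
  simpa [incidence, Finset.sum_ite_mem] using congrFun hy ⟨e, he⟩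

theorem dotProduct_diagonal_hdeg_mulVec (E : Finset (Finset (Fin n))) (y : Fin n → ℝ) :
    y ⬝ᵥ diagonal (fun v => (hdeg E v : ℝ)) *ᵥ y = ∑ e ∈ E, ∑ u ∈ e, y u ^ 2 := by
  simp only [dotProduct, mulVec_diagonal, hdeg, card_filter, Nat.cast_sum, Nat.cast_ite,
    Nat.cast_one, Nat.cast_zero, sum_mul, mul_sum]
  rw [sum_comm]
  refine sum_congr rfl fun e _ => ?_
  simp [sum_ite_mem, sq]

theorem adjMat_apply_eq_sum (E : Finset (Finset (Fin n))) (u v : Fin n) :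
    adjMat E u v = ∑ e ∈ E, if (u, v) ∈ e.offDiag then ((e.card : ℝ) - 1)⁻¹ else 0 := by
  rw [adjMat]
  split_ifs with h
  · simp [h]
  · rw [sum_filter]
    exact sum_congr rfl fun e _ => by simp [h]

theorem dotProduct_adjMat_mulVec (E : Finset (Finset (Fin n))) (y : Fin n → ℝ) :
    y ⬝ᵥ adjMat E *ᵥ y =
      ∑ e ∈ E, ((∑ u ∈ e, y u) ^ 2 - ∑ u ∈ e, y u ^ 2) / ((e.card : ℝ) - 1) := by
  calc y ⬝ᵥ adjMat E *ᵥ y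
      = ∑ p : Fin n × Fin n, ∑ e ∈ E,
          if p ∈ e.offDiag then y p.1 * y p.2 / ((e.card : ℝ) - 1) else 0 := by
        simp only [dotProduct, mulVec, adjMat_apply_eq_sum, mul_sum, sum_mul,
          Fintype.sum_prod_type]
        refine sum_congr rfl fun u _ => sum_congr rfl fun v _ => sum_congr rfl fun e _ => ?_
        split_ifs <;> ring
    _ = ∑ e ∈ E, ∑ p ∈ e.offDiag, y p.1 * y p.2 / ((e.card : ℝ) - 1) := by
        rw [sum_comm]
        exact sum_congr rfl fun e _ => by rw [sum_ite_mem, univ_inter]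
    _ = _ := by simp only [← sum_div, sum_offDiag_mul]

theorem dotProduct_lapMat_mulVec (E : Finset (Finset (Fin n))) (y : Fin n → ℝ) :
    y ⬝ᵥ lapMat E *ᵥ y = ∑ e ∈ E, (∑ u ∈ e, y u ^ 2 -
      ((∑ u ∈ e, y u) ^ 2 - ∑ u ∈ e, y u ^ 2) / ((e.card : ℝ) - 1)) := by
  rw [lapMat, sub_mulVec, dotProduct_sub, dotProduct_diagonal_hdeg_mulVec,
    dotProduct_adjMat_mulVec, sum_sub_distrib]

theorem dotProduct_lapMat_mulVec_of_uniform {k : ℕ} (hk : k ≠ 1) {E : Finset (Finset (Fin n))}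
    (hunif : ∀ e ∈ E, e.card = k) (y : Fin n → ℝ) :
    y ⬝ᵥ lapMat E *ᵥ y = k / (k - 1) * (y ⬝ᵥ diagonal (fun v => (hdeg E v : ℝ)) *ᵥ y)
      - ∑ e ∈ E, (∑ u ∈ e, y u) ^ 2 / (k - 1) := by
  have hk' : (k : ℝ) - 1 ≠ 0 := sub_ne_zero.mpr (by exact_mod_cast hk)
  rw [dotProduct_lapMat_mulVec, dotProduct_diagonal_hdeg_mulVec, mul_sum, ← sum_sub_distrib]
  refine sum_congr rfl fun e he => ?_
  rw [hunif e he]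
  field_simp
  ring

theorem adjMat_isHermitian (E : Finset (Finset (Fin n))) : (adjMat E).IsHermitian := by
  ext u v
  simp only [conjTranspose_apply, star_trivial, adjMat_apply_eq_sum, mem_offDiag]
  exact sum_congr rfl fun e _ => by simp only [and_left_comm, ne_comm]

theorem normLap_isHermitian (E : Finset (Finset (Fin n))) : (normLap E).IsHermitian := by
  have hL : (lapMat E).IsHermitian := (isHermitian_diagonal _).sub (adjMat_isHermitian E)
  have h :=
    isHermitian_mul_mul_conjTranspose (diagonal fun v => (hdeg E v : ℝ) ^ (-(1/2) : ℝ)) hL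
  rwa [diagonal_conjTranspose, star_trivial] at h

theorem dotProduct_normLap_mulVec_of_uniform {k : ℕ} (hk : k ≠ 1) {E : Finset (Finset (Fin n))}
    (hunif : ∀ e ∈ E, e.card = k) (hiso : ∀ v, 0 < hdeg E v) (x : Fin n → ℝ) :
    x ⬝ᵥ normLap E *ᵥ x = k / (k - 1) * (x ⬝ᵥ x)
      - ∑ e ∈ E, (∑ u ∈ e, (hdeg E u : ℝ) ^ (-(1/2) : ℝ) * x u) ^ 2 / (k - 1) := by
  rw [normLap, dotProduct_diagonal_mul_mul_diagonal_mulVec,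
    dotProduct_lapMat_mulVec_of_uniform hk hunif,
    dotProduct_diagonal_mulVec_rpow_neg_half (fun v => Nat.cast_pos.mpr (hiso v))]
  rfl

theorem stmt12 (n k : ℕ) (hk : 2 ≤ k) (E : Finset (Finset (Fin n)))
    (hunif : ∀ e ∈ E, e.card = k) (hiso : ∀ v : Fin n, 0 < hdeg E v)
    (hE : E.card < n) :
    lamMax (normLap E) = (k : ℝ) / ((k : ℝ) - 1) := by
  have hdeg_pos : ∀ v, (0 : ℝ) < hdeg E v := fun v => Nat.cast_pos.mpr (hiso v)
  have hk_pos : (0 : ℝ) < k - 1 := by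
    have : (2 : ℝ) ≤ k := by exact_mod_cast hk
    linarith
  have hquad := dotProduct_normLap_mulVec_of_uniform (by omega) hunif hiso
  obtain ⟨y, hy0, hy⟩ := exists_ne_zero_forall_sum_eq_zero (K := ℝ) E (by simpa using hE)
  set x : Fin n → ℝ := fun v => (hdeg E v : ℝ) ^ (1/2 : ℝ) * y v
  have hxy : ∀ v, (hdeg E v : ℝ) ^ (-(1/2) : ℝ) * x v = y v := fun v => by
    rw [← mul_assoc, ← Real.rpow_add (hdeg_pos v)]
    norm_num
  have hx0 : x ≠ 0 := fun h => hy0 (funext fun v => by simpa [h] using (hxy v).symm)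
  refine lamMax_eq_of_dotProduct_mulVec_le (normLap_isHermitian E) (fun z => ?_) hx0 ?_
  · rw [hquad]
    have := sum_nonneg fun e (_ : e ∈ E) =>
      div_nonneg (sq_nonneg (∑ u ∈ e, (hdeg E u : ℝ) ^ (-(1/2) : ℝ) * z u)) hk_pos.le
    linarith
  · rw [hquad, sub_eq_self]
    exact sum_eq_zero fun e he => by simp only [hxy, hy e he, sq, zero_mul, zero_div]
end

section
/- Let H be a k-uniform hypergraph on n vertices without isolated vertices, and let λ = max{ |1 - λ_i(H)| : i = 1, ..., n-1 }. For any subsets X, Y ⊆ V(H), | m(X,Y)/(k-1) - vol(X)vol(Y)/vol(V(H)) | ≤ λ · sqrt( vol(X) vol(V\X) vol(Y) vol(V\Y) ) / vol(V(H)), where m(X,Y) = Σ_{u∈X} Σ_{v∈Y} e_{uv}. -/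
open Finset

variable {n : ℕ}

noncomputable def cheeger {n : ℕ} (E : Finset (Finset (Fin n))) : ℝ :=
  sInf {x : ℝ | ∃ S : Finset (Fin n), S.Nonempty ∧ S ≠ Finset.univ ∧
    volR E S ≤ volR E Sᶜ ∧ x = bndR E S / volR E S}

/-!
Let `D` be the degree matrix, `A` the adjacency matrix and `N = D^{-1/2} (D - A) D^{-1/2}`. For
`x = D^{1/2} 1_X` and `y = D^{1/2} 1_Y` one has `x ⬝ (y - N y) = 1_X ⬝ A 1_Y = m(X,Y)/(k-1)`, and
`φ = D^{1/2} 1` is a null vector of `N` with `x ⬝ φ = vol X` and `φ ⬝ φ = vol V`. Removing the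
components of `x` and `y` along `φ` subtracts exactly `vol X vol Y / vol V` and leaves vectors of
squared length `vol X vol Xᶜ / vol V` and `vol Y vol Yᶜ / vol V`. As `N` is positive
semidefinite, the eigenvalue left out of `λ` is `0`: either it is repeated, and then `λ ≥ 1` covers
it, or its eigenspace is spanned by `φ`. Either way `I - N` has norm at most `λ` on `φ^⊥`, and
Cauchy–Schwarz in an orthonormal eigenbasis gives the bound.
-/

open Matrix

namespace Matrix.IsHermitian

variable {ι : Type*} [Fintype ι] [DecidableEq ι] {M : Matrix ι ι ℝ} (hM : M.IsHermitian)

noncomputable def eigenCoords (x : ι → ℝ) : ι → ℝ :=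
  star (hM.eigenvectorUnitary : Matrix ι ι ℝ) *ᵥ x

lemma eigenCoords_dotProduct_eigenCoords (x y : ι → ℝ) :
    hM.eigenCoords x ⬝ᵥ hM.eigenCoords y = x ⬝ᵥ y := by
  rw [eigenCoords, eigenCoords, dotProduct_mulVec, star_eq_conjTranspose,
    conjTranspose_eq_transpose_of_trivial, vecMul_transpose, mulVec_mulVec,
    ← conjTranspose_eq_transpose_of_trivial, ← star_eq_conjTranspose,
    Unitary.mul_star_self_of_mem hM.eigenvectorUnitary.2, one_mulVec]

lemma eigenCoords_mulVec (y : ι → ℝ) (i : ι) :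
    hM.eigenCoords (M *ᵥ y) i = hM.eigenvalues i * hM.eigenCoords y i := by
  have h := hM.conjStarAlgAut_star_eigenvectorUnitary
  rw [Unitary.conjStarAlgAut_star_apply] at h
  have h2 : star (hM.eigenvectorUnitary : Matrix ι ι ℝ) * M =
      diagonal (RCLike.ofReal ∘ hM.eigenvalues) * star (hM.eigenvectorUnitary : Matrix ι ι ℝ) := by
    rw [← h, mul_assoc _ _ (star _), Unitary.mul_star_self_of_mem hM.eigenvectorUnitary.2, mul_one]
  rw [eigenCoords, eigenCoords, mulVec_mulVec, h2, ← mulVec_mulVec, mulVec_diagonal]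
  rfl

lemma dotProduct_sub_mulVec_eq_sum (x y : ι → ℝ) :
    x ⬝ᵥ (y - M *ᵥ y) =
      ∑ i, (1 - hM.eigenvalues i) * (hM.eigenCoords x i * hM.eigenCoords y i) := by
  rw [← hM.eigenCoords_dotProduct_eigenCoords, dotProduct]
  refine sum_congr rfl fun i _ => ?_
  have hsub : hM.eigenCoords (y - M *ᵥ y) i = hM.eigenCoords y i - hM.eigenCoords (M *ᵥ y) i := by
    simp only [eigenCoords, mulVec_sub, Pi.sub_apply]
  rw [hsub, eigenCoords_mulVec]
  ring

lemma abs_dotProduct_sub_mulVec_le {lam : ℝ} (hlam : 0 ≤ lam) {x : ι → ℝ}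
    (hx : ∀ i, lam < |1 - hM.eigenvalues i| → hM.eigenCoords x i = 0) (y : ι → ℝ) :
    |x ⬝ᵥ (y - M *ᵥ y)| ≤ lam * √(x ⬝ᵥ x) * √(y ⬝ᵥ y) := by
  set c := hM.eigenCoords x
  set d := hM.eigenCoords y
  have hterm : ∀ i, |(1 - hM.eigenvalues i) * (c i * d i)| ≤ lam * (|c i| * |d i|) := by
    intro i
    rw [abs_mul, abs_mul]
    by_cases hi : lam < |1 - hM.eigenvalues i|
    · simp [c, hx i hi]
    · exact mul_le_mul_of_nonneg_right (not_lt.mp hi) (by positivity)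
  have hCS : ∑ i, |c i| * |d i| ≤ √(c ⬝ᵥ c) * √(d ⬝ᵥ d) := by
    simpa only [sq_abs, dotProduct, pow_two, abs_mul_abs_self] using
      Real.sum_mul_le_sqrt_mul_sqrt univ (fun i => |c i|) (fun i => |d i|)
  calc |x ⬝ᵥ (y - M *ᵥ y)|
      ≤ ∑ i, |(1 - hM.eigenvalues i) * (c i * d i)| := by
        rw [hM.dotProduct_sub_mulVec_eq_sum]; exact abs_sum_le_sum_abs _ _
    _ ≤ ∑ i, lam * (|c i| * |d i|) := sum_le_sum fun i _ => hterm i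
    _ ≤ lam * √(x ⬝ᵥ x) * √(y ⬝ᵥ y) := by
        rw [← mul_sum, mul_assoc, ← hM.eigenCoords_dotProduct_eigenCoords x x,
          ← hM.eigenCoords_dotProduct_eigenCoords y y]
        exact mul_le_mul_of_nonneg_left hCS hlam

lemma eigenCoords_eq_zero_of_forall_ne_eigenvalues_ne_zero {φ x : ι → ℝ}
    (hφ : M *ᵥ φ = 0) (hφ0 : φ ≠ 0) (hxφ : x ⬝ᵥ φ = 0) {i : ι}
    (hi : ∀ j, j ≠ i → hM.eigenvalues j ≠ 0) : hM.eigenCoords x i = 0 := by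
  have hφj : ∀ j, j ≠ i → hM.eigenCoords φ j = 0 := fun j hj => by
    have h := hM.eigenCoords_mulVec φ j
    rw [hφ, eigenCoords, mulVec_zero] at h
    exact (mul_eq_zero.mp h.symm).resolve_left (hi j hj)
  have hφi : hM.eigenCoords φ i ≠ 0 := by
    intro h0
    have : hM.eigenCoords φ = 0 := funext fun j => by
      by_cases hj : j = i
      · rw [hj, h0]; rfl
      · exact hφj j hj
    apply hφ0
    rw [← dotProduct_self_eq_zero, ← hM.eigenCoords_dotProduct_eigenCoords, this, zero_dotProduct]
  have hsum : hM.eigenCoords x ⬝ᵥ hM.eigenCoords φ = hM.eigenCoords x i * hM.eigenCoords φ i :=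
    sum_eq_single i (fun j _ hj => by rw [hφj j hj, mul_zero])
      (fun h => absurd (mem_univ i) h)
  rw [hM.eigenCoords_dotProduct_eigenCoords, hxφ] at hsum
  exact (mul_eq_zero.mp hsum.symm).resolve_right hφi

theorem abs_dotProduct_sub_mulVec_sub_le {φ : ι → ℝ} (hφ : M *ᵥ φ = 0) (hφ0 : φ ≠ 0)
    {lam : ℝ} (hlam : 0 ≤ lam)
    (hgap : ∀ x, x ⬝ᵥ φ = 0 → ∀ i, lam < |1 - hM.eigenvalues i| → hM.eigenCoords x i = 0)
    (x y : ι → ℝ) :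
    |x ⬝ᵥ (y - M *ᵥ y) - (x ⬝ᵥ φ) * (y ⬝ᵥ φ) / (φ ⬝ᵥ φ)| ≤
      lam * √(x ⬝ᵥ x - (x ⬝ᵥ φ) ^ 2 / (φ ⬝ᵥ φ)) * √(y ⬝ᵥ y - (y ⬝ᵥ φ) ^ 2 / (φ ⬝ᵥ φ)) := by
  have hφφ : φ ⬝ᵥ φ ≠ 0 := fun h => hφ0 (dotProduct_self_eq_zero.mp h)
  have hφM : ∀ z, φ ⬝ᵥ (M *ᵥ z) = 0 := fun z => by
    rw [dotProduct_mulVec, ← hM.eq, conjTranspose_eq_transpose_of_trivial, vecMul_transpose, hφ,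
      zero_dotProduct]
  set x' := x - (x ⬝ᵥ φ / φ ⬝ᵥ φ) • φ
  set y' := y - (y ⬝ᵥ φ / φ ⬝ᵥ φ) • φ
  have hx'φ : x' ⬝ᵥ φ = 0 := by
    simp only [x', sub_dotProduct, smul_dotProduct, smul_eq_mul]; field_simp; ring
  have hMy' : M *ᵥ y' = M *ᵥ y := by simp [y', mulVec_sub, mulVec_smul, hφ]
  have hmix : x' ⬝ᵥ (y' - M *ᵥ y') = x ⬝ᵥ (y - M *ᵥ y) - (x ⬝ᵥ φ) * (y ⬝ᵥ φ) / (φ ⬝ᵥ φ) := by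
    simp only [hMy', x', y', sub_dotProduct, dotProduct_sub, smul_dotProduct, dotProduct_smul,
      smul_eq_mul, hφM, dotProduct_comm φ y]
    field_simp; ring
  have hnorm : ∀ z : ι → ℝ, (z - (z ⬝ᵥ φ / φ ⬝ᵥ φ) • φ) ⬝ᵥ (z - (z ⬝ᵥ φ / φ ⬝ᵥ φ) • φ) =
      z ⬝ᵥ z - (z ⬝ᵥ φ) ^ 2 / (φ ⬝ᵥ φ) := fun z => by
    simp only [sub_dotProduct, dotProduct_sub, smul_dotProduct, dotProduct_smul, smul_eq_mul,
      dotProduct_comm φ z]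
    field_simp; ring
  rw [← hmix, ← hnorm x, ← hnorm y]
  exact hM.abs_dotProduct_sub_mulVec_le hlam (hgap x' hx'φ) y'

end Matrix.IsHermitian

theorem Matrix.posSemidef_diagonal_sum_sub {ι : Type*} [Fintype ι] [DecidableEq ι]
    {A : Matrix ι ι ℝ} (hA : A.IsSymm) (hA0 : ∀ i j, 0 ≤ A i j) :
    (diagonal (fun i => ∑ j, A i j) - A).PosSemidef := by
  refine PosSemidef.of_dotProduct_mulVec_nonneg ?_ fun x => ?_
  · rw [isHermitian_iff_isSymm]
    exact (isSymm_diagonal _).sub hA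
  have hform : star x ⬝ᵥ ((diagonal (fun i => ∑ j, A i j) - A) *ᵥ x) =
      ∑ i, ∑ j, A i j * (x i * x i - x i * x j) := by
    rw [star_trivial, sub_mulVec, dotProduct_sub]
    simp only [dotProduct, mulVec_diagonal]
    simp only [mulVec, dotProduct, sum_mul, mul_sum, ← sum_sub_distrib]
    exact sum_congr rfl fun i _ => sum_congr rfl fun j _ => by ring
  have hswap : ∑ i, ∑ j, A i j * (x i * x i - x i * x j) =
      ∑ i, ∑ j, A i j * (x j * x j - x j * x i) := by
    rw [sum_comm]
    exact sum_congr rfl fun i _ => sum_congr rfl fun j _ => by rw [hA.apply i j]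
  have hsq : 2 * ∑ i, ∑ j, A i j * (x i * x i - x i * x j) = ∑ i, ∑ j, A i j * (x i - x j) ^ 2 := by
    rw [two_mul]
    nth_rw 2 [hswap]
    simp only [← sum_add_distrib]
    exact sum_congr rfl fun i _ => sum_congr rfl fun j _ => by ring
  have hnonneg : 0 ≤ ∑ i, ∑ j, A i j * (x i - x j) ^ 2 :=
    sum_nonneg fun i _ => sum_nonneg fun j _ => mul_nonneg (hA0 i j) (sq_nonneg _)
  rw [hform]
  linarith

lemma eigsAsc_eq {M : Matrix (Fin n) (Fin n) ℝ} (hM : M.IsHermitian) :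
    eigsAsc M = hM.eigenvalues ∘ Tuple.sort hM.eigenvalues := by
  rw [eigsAsc, dif_pos hM]

lemma eigenCoords_eq_zero_of_lt_abs_one_sub (hn : 0 < n) {M : Matrix (Fin n) (Fin n) ℝ}
    (hM : M.PosSemidef) {φ x : Fin n → ℝ} (hφ : M *ᵥ φ = 0) (hφ0 : φ ≠ 0) (hxφ : x ⬝ᵥ φ = 0)
    {i : Fin n}
    (hi : ⨆ j : {j : Fin n // j ≠ ⟨0, hn⟩}, |1 - eigsAsc M j| < |1 - hM.1.eigenvalues i|) :
    hM.1.eigenCoords x i = 0 := by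
  set μ := hM.1.eigenvalues
  set σ := Tuple.sort μ
  have hle : ∀ j, σ.symm j ≠ ⟨0, hn⟩ →
      |1 - μ j| ≤ ⨆ j : {j : Fin n // j ≠ ⟨0, hn⟩}, |1 - eigsAsc M j| := fun j hj => by
    refine le_trans (le_of_eq ?_) (le_ciSup (Set.finite_range _).bddAbove ⟨σ.symm j, hj⟩)
    simp [eigsAsc_eq hM.1, μ, σ]
  have hi0 : σ.symm i = ⟨0, hn⟩ := by
    by_contra h
    exact (hle i h).not_gt hi
  refine hM.1.eigenCoords_eq_zero_of_forall_ne_eigenvalues_ne_zero hφ hφ0 hxφ fun j hj hμj => ?_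
  change μ j = 0 at hμj
  have hji : σ.symm j ≠ ⟨0, hn⟩ := fun h => hj (σ.symm.injective (h.trans hi0.symm))
  have hμi : μ i = 0 := by
    refine le_antisymm ?_ (hM.eigenvalues_nonneg i)
    have hmono := Tuple.monotone_sort μ
      (show σ.symm i ≤ σ.symm j by rw [hi0, Fin.le_def]; exact Nat.zero_le _)
    simpa [σ, hμj] using hmono
  have := hle j hji
  rw [hμj] at this
  rw [hμi] at hi
  linarith

section Hypergraph

variable {E : Finset (Finset (Fin n))}

lemma adjMat_comm (u v : Fin n) : adjMat E u v = adjMat E v u := by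
  simp only [adjMat, eq_comm (a := u), and_comm (a := u ∈ _)]

lemma adjMat_nonneg (u v : Fin n) : 0 ≤ adjMat E u v := by
  unfold adjMat
  split_ifs
  · exact le_rfl
  refine sum_nonneg fun e he => ?_
  have : (1 : ℝ) ≤ e.card := by
    exact_mod_cast card_pos.mpr ⟨u, (mem_filter.mp he).2.1⟩
  exact div_nonneg zero_le_one (by linarith)

lemma adjMat_of_ne {k : ℕ} (hunif : ∀ e ∈ E, e.card = k) {u v : Fin n} (huv : u ≠ v) :
    adjMat E u v = codeg E u v / ((k : ℝ) - 1) := by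
  rw [adjMat, if_neg huv, codeg, sum_congr rfl fun e he => by rw [hunif e (mem_filter.mp he).1],
    sum_const, nsmul_eq_mul, mul_one_div]

lemma adjMat_eq_sum_filter_mem (u v : Fin n) :
    adjMat E u v = ∑ e ∈ E.filter (u ∈ ·), if v ∈ e.erase u then 1 / ((e.card : ℝ) - 1) else 0 := by
  rw [← sum_filter, filter_filter]
  by_cases huv : u = v
  · subst huv
    simp [adjMat]
  · rw [adjMat, if_neg huv]
    congr 1
    ext e
    simp [Ne.symm huv]

lemma sum_adjMat (hE : ∀ e ∈ E, e.card ≠ 1) (u : Fin n) : ∑ v, adjMat E u v = hdeg E u := by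
  simp_rw [adjMat_eq_sum_filter_mem u]
  rw [sum_comm, hdeg, card_eq_sum_ones, Nat.cast_sum]
  refine sum_congr rfl fun e he => ?_
  obtain ⟨heE, hue⟩ := mem_filter.mp he
  have hcard : ((e.erase u).card : ℝ) = (e.card : ℝ) - 1 := by
    rw [card_erase_of_mem hue, Nat.cast_sub (card_pos.mpr ⟨u, hue⟩), Nat.cast_one]
  have hne : (e.card : ℝ) - 1 ≠ 0 := by
    rw [← hcard, Nat.cast_ne_zero, ← Nat.pos_iff_ne_zero, card_erase_of_mem hue]
    have := card_pos.mpr ⟨u, hue⟩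
    have := hE e heE
    omega
  rw [sum_ite_mem, univ_inter, sum_const, nsmul_eq_mul, hcard, Nat.cast_one, mul_one_div_cancel hne]

lemma adjMat_isSymm : (adjMat E).IsSymm :=
  IsSymm.ext fun u v => adjMat_comm v u

lemma lapMat_posSemidef (hE : ∀ e ∈ E, e.card ≠ 1) : (lapMat E).PosSemidef := by
  have hL : lapMat E = diagonal (fun u => ∑ v, adjMat E u v) - adjMat E := by
    simp_rw [lapMat, sum_adjMat hE]
  rw [hL]
  exact posSemidef_diagonal_sum_sub adjMat_isSymm adjMat_nonneg

lemma normLap_posSemidef (hE : ∀ e ∈ E, e.card ≠ 1) : (normLap E).PosSemidef := by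
  have h := (lapMat_posSemidef hE).conjTranspose_mul_mul_same
    (diagonal fun v => (hdeg E v : ℝ) ^ (-(1 / 2) : ℝ))
  rwa [diagonal_conjTranspose, star_trivial] at h

lemma lapMat_mulVec_one (hE : ∀ e ∈ E, e.card ≠ 1) : lapMat E *ᵥ (fun _ => 1) = 0 := by
  funext u
  rw [lapMat, sub_mulVec, Pi.sub_apply, mulVec_diagonal, Pi.zero_apply, mul_one, sub_eq_zero]
  simp only [mulVec, dotProduct, mul_one, sum_adjMat hE]

noncomputable def sqrtDegOn (E : Finset (Finset (Fin n))) (X : Finset (Fin n)) : Fin n → ℝ :=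
  fun v => if v ∈ X then √(hdeg E v) else 0

lemma sqrtDegOn_dotProduct_sqrtDegOn (X Y : Finset (Fin n)) :
    sqrtDegOn E X ⬝ᵥ sqrtDegOn E Y = volR E (X ∩ Y) := by
  rw [volR, ← univ_inter (X ∩ Y), ← sum_ite_mem, dotProduct]
  refine sum_congr rfl fun v _ => ?_
  by_cases hX : v ∈ X <;> by_cases hY : v ∈ Y <;>
    simp [sqrtDegOn, hX, hY, Real.mul_self_sqrt (Nat.cast_nonneg _)]

lemma volR_nonneg (X : Finset (Fin n)) : 0 ≤ volR E X :=
  sum_nonneg fun _ _ => Nat.cast_nonneg _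

lemma volR_univ_pos (hn : 0 < n) (hiso : ∀ v, 0 < hdeg E v) : 0 < volR E univ :=
  sum_pos (fun v _ => Nat.cast_pos.mpr (hiso v)) ⟨⟨0, hn⟩, mem_univ _⟩

lemma volR_sub_sq_div_volR_univ (h : volR E univ ≠ 0) (X : Finset (Fin n)) :
    volR E X - volR E X ^ 2 / volR E univ = volR E X * volR E Xᶜ / volR E univ := by
  have hcompl : volR E Xᶜ = volR E univ - volR E X := by
    rw [volR, volR, volR, ← sum_add_sum_compl X]
    ring
  rw [hcompl]
  field_simp

lemma sqrtDegOn_univ_ne_zero (hn : 0 < n) (hiso : ∀ v, 0 < hdeg E v) : sqrtDegOn E univ ≠ 0 := by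
  intro h
  have := sqrtDegOn_dotProduct_sqrtDegOn (E := E) univ univ
  rw [h, zero_dotProduct, univ_inter] at this
  exact (volR_univ_pos hn hiso).ne this

lemma diagonal_rpow_mulVec_sqrtDegOn (hiso : ∀ v, 0 < hdeg E v) (X : Finset (Fin n)) :
    diagonal (fun v => (hdeg E v : ℝ) ^ (-(1 / 2) : ℝ)) *ᵥ sqrtDegOn E X =
      fun v => if v ∈ X then 1 else 0 := by
  funext v
  have hv : (0 : ℝ) < hdeg E v := Nat.cast_pos.mpr (hiso v)
  rw [mulVec_diagonal, sqrtDegOn, mul_ite, mul_zero, Real.rpow_neg hv.le, ← Real.sqrt_eq_rpow,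
    inv_mul_cancel₀ (Real.sqrt_pos.mpr hv).ne']

lemma sqrtDegOn_dotProduct_conj_mulVec (hiso : ∀ v, 0 < hdeg E v) (B : Matrix (Fin n) (Fin n) ℝ)
    (X Y : Finset (Fin n)) :
    sqrtDegOn E X ⬝ᵥ ((diagonal (fun v => (hdeg E v : ℝ) ^ (-(1 / 2) : ℝ)) * B *
      diagonal (fun v => (hdeg E v : ℝ) ^ (-(1 / 2) : ℝ))) *ᵥ sqrtDegOn E Y) =
      ∑ u ∈ X, ∑ v ∈ Y, B u v := by
  rw [← mulVec_mulVec, ← mulVec_mulVec, diagonal_rpow_mulVec_sqrtDegOn hiso, dotProduct_mulVec,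
    ← diagonal_transpose, vecMul_transpose, diagonal_rpow_mulVec_sqrtDegOn hiso]
  simp [dotProduct, mulVec]

lemma normLap_mulVec_sqrtDegOn_univ (hE : ∀ e ∈ E, e.card ≠ 1) (hiso : ∀ v, 0 < hdeg E v) :
    normLap E *ᵥ sqrtDegOn E univ = 0 := by
  rw [normLap, ← mulVec_mulVec, diagonal_rpow_mulVec_sqrtDegOn hiso, ← mulVec_mulVec]
  simp only [mem_univ, if_true]
  rw [lapMat_mulVec_one hE, mulVec_zero]

lemma sqrtDegOn_dotProduct_sub_normLap_mulVec {k : ℕ} (hunif : ∀ e ∈ E, e.card = k)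
    (hiso : ∀ v, 0 < hdeg E v) (X Y : Finset (Fin n)) :
    sqrtDegOn E X ⬝ᵥ (sqrtDegOn E Y - normLap E *ᵥ sqrtDegOn E Y) =
      (∑ u ∈ X, ∑ v ∈ Y.erase u, (codeg E u v : ℝ)) / ((k : ℝ) - 1) := by
  have hdiag : ∑ u ∈ X, ∑ v ∈ Y, diagonal (fun v => (hdeg E v : ℝ)) u v = volR E (X ∩ Y) := by
    simp [diagonal_apply, volR, sum_ite_mem]
  have hadj : ∀ u, ∑ v ∈ Y, adjMat E u v = ∑ v ∈ Y.erase u, (codeg E u v : ℝ) / ((k : ℝ) - 1) :=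
    fun u => by
      rw [← sum_erase Y (show adjMat E u u = 0 by simp [adjMat])]
      exact sum_congr rfl fun v hv => adjMat_of_ne hunif (mem_erase.mp hv).1.symm
  rw [dotProduct_sub, sqrtDegOn_dotProduct_sqrtDegOn, normLap,
    sqrtDegOn_dotProduct_conj_mulVec hiso, lapMat]
  simp only [Matrix.sub_apply, sum_sub_distrib, hdiag, hadj, sub_sub_cancel, sum_div]

end Hypergraph

theorem stmt19 (n k : ℕ) (hn : 2 ≤ n) (hk : 2 ≤ k) (E : Finset (Finset (Fin n)))
    (hunif : ∀ e ∈ E, e.card = k) (hiso : ∀ v : Fin n, 0 < hdeg E v)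
    (lam : ℝ)
    (hlam : lam = ⨆ i : {i : Fin n // i ≠ ⟨0, by omega⟩}, |1 - eigsAsc (normLap E) i.1|)
    (X Y : Finset (Fin n)) :
    |(∑ u ∈ X, ∑ v ∈ Y.erase u, (codeg E u v : ℝ)) / ((k : ℝ) - 1) -
        volR E X * volR E Y / volR E Finset.univ| ≤
      lam * Real.sqrt (volR E X * volR E Xᶜ * volR E Y * volR E Yᶜ) /
        volR E Finset.univ := by
  have hE : ∀ e ∈ E, e.card ≠ 1 := fun e he => by rw [hunif e he]; omega
  have hN := normLap_posSemidef hE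
  have hφ := normLap_mulVec_sqrtDegOn_univ hE hiso
  have hφ0 := sqrtDegOn_univ_ne_zero (by omega) hiso
  have hmix := hN.1.abs_dotProduct_sub_mulVec_sub_le hφ hφ0
    (hlam ▸ Real.iSup_nonneg fun _ => abs_nonneg _)
    (fun x hx i hi => eigenCoords_eq_zero_of_lt_abs_one_sub (by omega) hN hφ hφ0 hx (hlam ▸ hi))
    (sqrtDegOn E X) (sqrtDegOn E Y)
  have ht := volR_univ_pos (E := E) (by omega) hiso
  simp only [sqrtDegOn_dotProduct_sqrtDegOn, inter_self, inter_univ,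
    sqrtDegOn_dotProduct_sub_normLap_mulVec hunif hiso, volR_sub_sq_div_volR_univ ht.ne'] at hmix
  refine hmix.trans_eq ?_
  rw [Real.sqrt_div' _ ht.le, Real.sqrt_div' _ ht.le, mul_assoc (volR E X * _),
    Real.sqrt_mul (mul_nonneg (volR_nonneg X) (volR_nonneg Xᶜ))]
  field_simp
  rw [Real.sq_sqrt ht.le]
  ring
end
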